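/- arXiv:2603.12560 — 6 statements merged into one kernel-verified Lean document; each statement's English description precedes it below -/
import Mathlib

section
/- Let S be a finite set of size P containing a subset T of K ≥ 1 successes, and fix a distinguished success element b ∈ T. Sample elements of S \ {b} uniformly without replacement, counting failures F until the first element of T \ {b} is drawn (or until S \ {b} is exhausted if K = 1). Then E[F + 1] = P/K. -/
open Finset

/-- Prefix failure count equals the number of "failures" that come (weakly) before
all "successes" under a bijection `σ`. -/
lemma prefix_count {n : ℕ} {β : Type*} [Fintype β] [DecidableEq β]
    (p : β → Prop) [DecidablePred p] (σ : Fin n ≃ β) :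
    (Finset.univ.filter (fun i : Fin n => ∀ j ≤ i, ¬ p (σ j))).card
      = (Finset.univ.filter
          (fun x : β => ¬ p x ∧ ∀ t : β, p t → σ.symm x ≤ σ.symm t)).card := by
  apply Finset.card_bij (fun i _ => σ i)
  · intro i hi
    simp only [mem_filter, mem_univ, true_and] at hi ⊢
    refine ⟨hi i le_rfl, fun t ht => ?_⟩
    rw [Equiv.symm_apply_apply]
    by_contra hle
    push_neg at hle
    exact hi (σ.symm t) hle.le (by simpa using ht)
  · intro i _ j _ h
    exact σ.injective h
  · intro x hx
    simp only [mem_filter, mem_univ, true_and] at hx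
    refine ⟨σ.symm x, ?_, by simp⟩
    simp only [mem_filter, mem_univ, true_and]
    intro j hj hp
    have h1 : σ.symm x ≤ j := by simpa using hx.2 (σ j) hp
    have hji : j = σ.symm x := le_antisymm hj h1
    apply hx.1
    have hx2 : σ j = x := by rw [hji, Equiv.apply_symm_apply]
    rwa [hx2] at hp

lemma count_min {n : ℕ} {β : Type*} [Fintype β] [DecidableEq β]
    (U : Finset β) (f : β) (hf : f ∈ U) :
    U.card * (Finset.univ.filter
        (fun σ : Fin n ≃ β => ∀ t ∈ U, σ.symm f ≤ σ.symm t)).card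
      = Fintype.card (Fin n ≃ β) := by
  classical
  set C : β → Finset (Fin n ≃ β) :=
    fun u => Finset.univ.filter (fun σ => ∀ t ∈ U, σ.symm u ≤ σ.symm t) with hC
  have hdisj : ∀ u ∈ U, ∀ v ∈ U, u ≠ v → Disjoint (C u) (C v) := by
    intro u hu v hv huv
    refine Finset.disjoint_left.mpr fun σ hσu hσv => ?_
    simp only [hC, mem_filter, mem_univ, true_and] at hσu hσv
    exact huv (σ.symm.injective (le_antisymm (hσu v hv) (hσv u hu)))
  have hcover : (Finset.univ : Finset (Fin n ≃ β)) = U.biUnion C := by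
    ext σ
    simp only [mem_biUnion, mem_univ, true_iff]
    have hne : (U.image (fun t => σ.symm t)).Nonempty := ⟨σ.symm f, mem_image_of_mem _ hf⟩
    obtain ⟨u, hu, hue⟩ := Finset.mem_image.mp (Finset.min'_mem _ hne)
    refine ⟨u, hu, ?_⟩
    simp only [hC, mem_filter, mem_univ, true_and]
    intro t ht
    rw [hue]
    exact Finset.min'_le _ _ (mem_image_of_mem _ ht)
  have hswap : ∀ u ∈ U, (C u).card = (C f).card := by
    intro u hu
    have hmem : ∀ v w : β, v ∈ U → w ∈ U → ∀ t ∈ U, Equiv.swap v w t ∈ U := by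
      intro v w hv hw t ht
      rcases eq_or_ne t v with rfl | h1
      · simpa [Equiv.swap_apply_left] using hw
      rcases eq_or_ne t w with rfl | h2
      · simpa [Equiv.swap_apply_right] using hv
      · simpa [Equiv.swap_apply_of_ne_of_ne h1 h2] using ht
    apply Finset.card_bij' (fun σ _ => σ.trans (Equiv.swap u f))
      (fun σ _ => σ.trans (Equiv.swap u f))
    case hi =>
      intro σ hσ
      simp only [hC, mem_filter, mem_univ, true_and] at hσ ⊢
      intro t ht
      simp only [Equiv.symm_trans_apply, Equiv.symm_swap]
      rw [Equiv.swap_apply_right]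
      exact hσ _ (hmem u f hu hf t ht)
    case hj =>
      intro σ hσ
      simp only [hC, mem_filter, mem_univ, true_and] at hσ ⊢
      intro t ht
      simp only [Equiv.symm_trans_apply, Equiv.symm_swap]
      rw [Equiv.swap_apply_left]
      exact hσ _ (hmem u f hu hf t ht)
    case left_inv =>
      intro σ hσ
      ext i
      simp [Equiv.swap_apply_self]
    case right_inv =>
      intro σ hσ
      ext i
      simp [Equiv.swap_apply_self]
  calc U.card * (C f).card
      = ∑ _u ∈ U, (C f).card := by rw [Finset.sum_const, smul_eq_mul]
    _ = ∑ u ∈ U, (C u).card := Finset.sum_congr rfl (fun u hu => (hswap u hu).symm)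
    _ = (U.biUnion C).card := (Finset.card_biUnion hdisj).symm
    _ = Fintype.card (Fin n ≃ β) := by rw [← hcover, Finset.card_univ]



/-- Acceptance-check expectation: `S` has `P` elements, `T ⊆ S` has `K ≥ 1` successes, and
`b ∈ T` is a distinguished success. Sampling the elements of `S \ {b}` uniformly without
replacement and letting `F` count failures before the first element of `T \ {b}`
(exhausting `S \ {b}` when `K = 1`), we have `E[F + 1] = P/K`. -/
theorem stmt2 {α : Type*} [DecidableEq α] (P K : ℕ) (S T : Finset α) (b : α)
    (hSP : S.card = P) (hTK : T.card = K) (hTS : T ⊆ S) (hK : 1 ≤ K) (hb : b ∈ T) :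
    (∑ σ : Fin (P - 1) ≃ {x // x ∈ S.erase b},
        (((Finset.univ.filter
            (fun i : Fin (P - 1) => ∀ j ≤ i, (σ j : α) ∉ T)).card : ℝ) + 1))
        / (Nat.factorial (P - 1) : ℝ)
      = (P : ℝ) / (K : ℝ) := by
  classical
  have hbS : b ∈ S := hTS hb
  have hKP : K ≤ P := by rw [← hSP, ← hTK]; exact Finset.card_le_card hTS
  have hcardβ : Fintype.card {x // x ∈ S.erase b} = P - 1 := by
    rw [Fintype.card_coe, Finset.card_erase_of_mem hbS, hSP]
  have hfact : Fintype.card (Fin (P - 1) ≃ {x // x ∈ S.erase b}) = (P - 1).factorial := by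
    rw [Fintype.card_equiv (Fintype.equivFinOfCardEq hcardβ).symm, Fintype.card_fin]
  have hT' : (Finset.univ.filter fun x : {x // x ∈ S.erase b} => (x : α) ∈ T).card = K - 1 := by
    have : (Finset.univ.filter fun x : {x // x ∈ S.erase b} => (x : α) ∈ T).card
        = (T.erase b).card := by
      refine Finset.card_bij (fun (x : {x // x ∈ S.erase b}) _ => (x : α)) ?_ ?_ ?_
      · intro x hx
        simp only [mem_filter, mem_univ, true_and] at hx
        exact Finset.mem_erase.mpr ⟨(Finset.mem_erase.mp x.2).1, hx⟩
      · intro x _ y _ h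
        exact Subtype.ext h
      · intro t ht
        obtain ⟨htb, htT⟩ := Finset.mem_erase.mp ht
        exact ⟨⟨t, Finset.mem_erase.mpr ⟨htb, hTS htT⟩⟩, by simp [htT], rfl⟩
    rw [this, Finset.card_erase_of_mem hb, hTK]
  have hF' : (Finset.univ.filter fun x : {x // x ∈ S.erase b} => (x : α) ∉ T).card = P - K := by
    have hsplit := Finset.card_filter_add_card_filter_not
      (s := (Finset.univ : Finset {x // x ∈ S.erase b})) (p := fun x => (x : α) ∈ T)
    rw [Finset.card_univ, hcardβ, hT'] at hsplit
    omega
  -- the key counting identity for each failure x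
  have main : ∀ x : {x // x ∈ S.erase b}, (x : α) ∉ T →
      K * (Finset.univ.filter
        (fun σ : Fin (P - 1) ≃ {x // x ∈ S.erase b} =>
          ∀ t : {x // x ∈ S.erase b}, (t : α) ∈ T → σ.symm x ≤ σ.symm t)).card = (P - 1).factorial := by
    intro x hx
    set U : Finset {x // x ∈ S.erase b} :=
      insert x (Finset.univ.filter fun y => (y : α) ∈ T) with hUdef
    have hxU : x ∈ U := Finset.mem_insert_self _ _
    have hU : U.card = K := by
      rw [hUdef, Finset.card_insert_of_notMem (by simp [hx]), hT']
      omega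
    have heq : (Finset.univ.filter
          (fun σ : Fin (P - 1) ≃ {x // x ∈ S.erase b} =>
            ∀ t : {x // x ∈ S.erase b}, (t : α) ∈ T → σ.symm x ≤ σ.symm t))
        = (Finset.univ.filter
            (fun σ : Fin (P - 1) ≃ {x // x ∈ S.erase b} =>
              ∀ t ∈ U, σ.symm x ≤ σ.symm t)) := by
      apply Finset.filter_congr
      intro σ _
      constructor
      · intro h t ht
        rcases Finset.mem_insert.mp ht with rfl | ht'
        · exact le_rfl
        · exact h t (by simpa using ht')
      · intro h t ht
        exact h t (Finset.mem_insert_of_mem (by simp [ht]))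
    rw [heq, ← hU, ← hfact]
    exact count_min U x hxU
  -- key nat identity
  have key : K * (∑ σ : Fin (P - 1) ≃ {x // x ∈ S.erase b},
      ((Finset.univ.filter
        (fun i : Fin (P - 1) => ∀ j ≤ i, (σ j : α) ∉ T)).card + 1)) = P * (P - 1).factorial := by
    have h1 : (∑ σ : Fin (P - 1) ≃ {x // x ∈ S.erase b},
        ((Finset.univ.filter
          (fun i : Fin (P - 1) => ∀ j ≤ i, (σ j : α) ∉ T)).card + 1))
        = (∑ σ : Fin (P - 1) ≃ {x // x ∈ S.erase b},
            (Finset.univ.filter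
              (fun i : Fin (P - 1) => ∀ j ≤ i, (σ j : α) ∉ T)).card) + (P - 1).factorial := by
      rw [Finset.sum_add_distrib, Finset.sum_const, Finset.card_univ, hfact, smul_eq_mul, mul_one]
    have h2 : (∑ σ : Fin (P - 1) ≃ {x // x ∈ S.erase b},
          (Finset.univ.filter
            (fun i : Fin (P - 1) => ∀ j ≤ i, (σ j : α) ∉ T)).card)
        = ∑ x : {x // x ∈ S.erase b}, ∑ σ : Fin (P - 1) ≃ {x // x ∈ S.erase b},
            if ((x : α) ∉ T ∧ ∀ t : {x // x ∈ S.erase b}, (t : α) ∈ T → σ.symm x ≤ σ.symm t) then 1 else 0 := by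
      rw [← Finset.sum_comm]
      apply Finset.sum_congr rfl
      intro σ _
      rw [prefix_count (fun x : {x // x ∈ S.erase b} => (x : α) ∈ T) σ, Finset.card_filter]
    have h3 : ∀ x : {x // x ∈ S.erase b},
        K * (∑ σ : Fin (P - 1) ≃ {x // x ∈ S.erase b},
          if ((x : α) ∉ T ∧ ∀ t : {x // x ∈ S.erase b}, (t : α) ∈ T → σ.symm x ≤ σ.symm t) then 1 else 0)
        = if (x : α) ∈ T then 0 else (P - 1).factorial := by
      intro x
      by_cases hx : (x : α) ∈ T
      · simp [hx]
      · rw [if_neg hx]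
        have hrw : (∑ σ : Fin (P - 1) ≃ {x // x ∈ S.erase b},
            if ((x : α) ∉ T ∧ ∀ t : {x // x ∈ S.erase b}, (t : α) ∈ T → σ.symm x ≤ σ.symm t) then 1 else 0)
            = (Finset.univ.filter
                (fun σ : Fin (P - 1) ≃ {x // x ∈ S.erase b} =>
                  ∀ t : {x // x ∈ S.erase b}, (t : α) ∈ T → σ.symm x ≤ σ.symm t)).card := by
          rw [Finset.card_filter]
          exact Finset.sum_congr rfl fun σ _ => by simp [hx]
        rw [hrw]
        exact main x hx
    rw [h1, h2, Nat.mul_add, Finset.mul_sum,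
      Finset.sum_congr rfl fun x _ => h3 x, Finset.sum_ite, Finset.sum_const_zero,
      Finset.sum_const, smul_eq_mul, zero_add]
    have : (Finset.univ.filter fun x : {x // x ∈ S.erase b} => ¬ (x : α) ∈ T).card = P - K := hF'
    rw [this, ← Nat.add_mul, Nat.sub_add_cancel hKP]
  -- pass to the reals
  have hfpos : (0 : ℝ) < (Nat.factorial (P - 1) : ℝ) := by
    exact_mod_cast Nat.factorial_pos (P - 1)
  have hKpos : (0 : ℝ) < (K : ℝ) := by exact_mod_cast hK
  rw [div_eq_div_iff hfpos.ne' hKpos.ne']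
  have hcast := congrArg (Nat.cast : ℕ → ℝ) key
  push_cast at hcast
  linarith [hcast]
end

section
/- Let R₁ ⊆ A × B and R₂ ⊆ B × C be finite binary relations, and let J = {(a,c) : ∃ b, (a,b) ∈ R₁ and (b,c) ∈ R₂} be the join-project result. For each (a,c) ∈ J let d₁(a) = |{b : (a,b) ∈ R₁}| and d₂(c) = |{b : (b,c) ∈ R₂}|. Then Σ_{(a,c) ∈ J} min{d₁(a), d₂(c)} ≤ Σ_{(a,c) ∈ J} √(d₁(a)·d₂(c)) ≤ (|R₁| + |R₂|) · √|J|. -/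
/-- For the matrix (join-project) query, the sum over output pairs of the minimum of the
two degrees is at most the sum of the geometric means, which in turn is at most
`(|R₁| + |R₂|) · √|J|` by Cauchy–Schwarz. -/
theorem stmt4 {A B C : Type*} [Fintype A] [Fintype B] [Fintype C]
    [DecidableEq A] [DecidableEq B] [DecidableEq C]
    (R₁ : Finset (A × B)) (R₂ : Finset (B × C))
    (J : Finset (A × C))
    (hJ : J = (Finset.univ : Finset (A × C)).filter
      (fun p => ∃ b, (p.1, b) ∈ R₁ ∧ (b, p.2) ∈ R₂))
    (d₁ : A → ℕ) (hd₁ : ∀ a, d₁ a = (R₁.filter (fun q => q.1 = a)).card)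
    (d₂ : C → ℕ) (hd₂ : ∀ c, d₂ c = (R₂.filter (fun q => q.2 = c)).card) :
    (∑ p ∈ J, min (d₁ p.1 : ℝ) (d₂ p.2 : ℝ)
        ≤ ∑ p ∈ J, Real.sqrt ((d₁ p.1 : ℝ) * (d₂ p.2 : ℝ))) ∧
    (∑ p ∈ J, Real.sqrt ((d₁ p.1 : ℝ) * (d₂ p.2 : ℝ))
        ≤ ((R₁.card : ℝ) + (R₂.card : ℝ)) * Real.sqrt (J.card : ℝ)) := by
  constructor
  · apply Finset.sum_le_sum
    intro p _
    have h1 : (0:ℝ) ≤ min (d₁ p.1 : ℝ) (d₂ p.2 : ℝ) := le_min (by positivity) (by positivity)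
    have h2 : min (d₁ p.1 : ℝ) (d₂ p.2 : ℝ) * min (d₁ p.1 : ℝ) (d₂ p.2 : ℝ)
        ≤ (d₁ p.1 : ℝ) * (d₂ p.2 : ℝ) :=
      mul_le_mul (min_le_left _ _) (min_le_right _ _) h1 (by positivity)
    nlinarith [Real.sq_sqrt (show (0:ℝ) ≤ (d₁ p.1 : ℝ) * (d₂ p.2 : ℝ) by positivity),
      Real.sqrt_nonneg ((d₁ p.1 : ℝ) * (d₂ p.2 : ℝ))]
  · -- cardinalities as sums of degrees
    have hc1 : R₁.card = ∑ a : A, d₁ a := by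
      simp only [hd₁]
      exact Finset.card_eq_sum_card_fiberwise (fun q _ => Finset.mem_univ q.1)
    have hc2 : R₂.card = ∑ c : C, d₂ c := by
      simp only [hd₂]
      exact Finset.card_eq_sum_card_fiberwise (fun q _ => Finset.mem_univ q.2)
    -- bound the sum of products
    have hprod : ∑ p ∈ J, (d₁ p.1 : ℝ) * (d₂ p.2 : ℝ) ≤ (R₁.card : ℝ) * (R₂.card : ℝ) := by
      have hsub : J ⊆ (Finset.univ : Finset (A × C)) := Finset.subset_univ _
      calc ∑ p ∈ J, (d₁ p.1 : ℝ) * (d₂ p.2 : ℝ)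
          ≤ ∑ p : A × C, (d₁ p.1 : ℝ) * (d₂ p.2 : ℝ) :=
            Finset.sum_le_sum_of_subset_of_nonneg hsub (fun p _ _ => by positivity)
        _ = (∑ a : A, (d₁ a : ℝ)) * (∑ c : C, (d₂ c : ℝ)) := by
            rw [Finset.sum_mul_sum, Fintype.sum_prod_type]
        _ = (R₁.card : ℝ) * (R₂.card : ℝ) := by rw [hc1, hc2]; push_cast; ring
    -- Cauchy–Schwarz
    have hCS : (∑ p ∈ J, Real.sqrt ((d₁ p.1 : ℝ) * (d₂ p.2 : ℝ))) ^ 2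
        ≤ (J.card : ℝ) * ∑ p ∈ J, (d₁ p.1 : ℝ) * (d₂ p.2 : ℝ) := by
      have := sq_sum_le_card_mul_sum_sq
        (s := J) (f := fun p => Real.sqrt ((d₁ p.1 : ℝ) * (d₂ p.2 : ℝ)))
      calc (∑ p ∈ J, Real.sqrt ((d₁ p.1 : ℝ) * (d₂ p.2 : ℝ))) ^ 2
          ≤ (J.card : ℝ) * ∑ p ∈ J, Real.sqrt ((d₁ p.1 : ℝ) * (d₂ p.2 : ℝ)) ^ 2 := this
        _ = (J.card : ℝ) * ∑ p ∈ J, (d₁ p.1 : ℝ) * (d₂ p.2 : ℝ) := by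
            congr 1
            exact Finset.sum_congr rfl fun p _ => Real.sq_sqrt (by positivity)
    have hS : (0:ℝ) ≤ ∑ p ∈ J, Real.sqrt ((d₁ p.1 : ℝ) * (d₂ p.2 : ℝ)) :=
      Finset.sum_nonneg fun p _ => Real.sqrt_nonneg _
    have h3 : (∑ p ∈ J, Real.sqrt ((d₁ p.1 : ℝ) * (d₂ p.2 : ℝ))) ^ 2
        ≤ ((R₁.card : ℝ) + (R₂.card : ℝ)) ^ 2 * (J.card : ℝ) := by
      have hJn : (0:ℝ) ≤ (J.card : ℝ) := Nat.cast_nonneg _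
      nlinarith [mul_le_mul_of_nonneg_left hprod hJn, sq_nonneg ((R₁.card : ℝ) - (R₂.card : ℝ))]
    calc ∑ p ∈ J, Real.sqrt ((d₁ p.1 : ℝ) * (d₂ p.2 : ℝ))
        = Real.sqrt ((∑ p ∈ J, Real.sqrt ((d₁ p.1 : ℝ) * (d₂ p.2 : ℝ))) ^ 2) :=
          (Real.sqrt_sq hS).symm
      _ ≤ Real.sqrt (((R₁.card : ℝ) + (R₂.card : ℝ)) ^ 2 * (J.card : ℝ)) :=
          Real.sqrt_le_sqrt h3
      _ = ((R₁.card : ℝ) + (R₂.card : ℝ)) * Real.sqrt (J.card : ℝ) := by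
          rw [Real.sqrt_mul (by positivity), Real.sqrt_sq (by positivity)]
end

section
/- Let R₁ ⊆ A × B and R₂ ⊆ B × C be finite binary relations with N = |R₁| + |R₂|, full join size OUT_⋈ = |{(a,b,c) : (a,b) ∈ R₁, (b,c) ∈ R₂}|, and projected output size OUT = |{(a,c) : ∃ b, (a,b) ∈ R₁, (b,c) ∈ R₂}|. Then OUT_⋈ ≤ N · √OUT. -/
open Finset

private lemma stmt5_aux (x y o : ℕ) (h : x * y ≤ o) :
    (x : ℝ) * y ≤ ((x : ℝ) + y) * Real.sqrt o := by
  have hs : (0:ℝ) ≤ Real.sqrt o := Real.sqrt_nonneg _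
  rcases le_total x y with hxy | hxy
  · have hx2 : ((x:ℝ))^2 ≤ (o:ℝ) := by
      have : x * x ≤ o := le_trans (Nat.mul_le_mul_left x hxy) h
      have := (Nat.cast_le (α := ℝ)).2 this
      push_cast at this; nlinarith
    have hx : (x:ℝ) ≤ Real.sqrt o := by
      rw [show (x:ℝ) = Real.sqrt ((x:ℝ)^2) by
        rw [Real.sqrt_sq (by positivity)]]
      exact Real.sqrt_le_sqrt hx2
    have hy0 : (0:ℝ) ≤ (y:ℝ) := by positivity
    have hx0 : (0:ℝ) ≤ (x:ℝ) := by positivity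
    nlinarith [mul_le_mul_of_nonneg_right hx hy0]
  · have hx2 : ((y:ℝ))^2 ≤ (o:ℝ) := by
      have : y * y ≤ o := le_trans (Nat.mul_le_mul_right y hxy) h
      have := (Nat.cast_le (α := ℝ)).2 this
      push_cast at this; nlinarith
    have hy : (y:ℝ) ≤ Real.sqrt o := by
      rw [show (y:ℝ) = Real.sqrt ((y:ℝ)^2) by
        rw [Real.sqrt_sq (by positivity)]]
      exact Real.sqrt_le_sqrt hx2
    have hy0 : (0:ℝ) ≤ (y:ℝ) := by positivity
    have hx0 : (0:ℝ) ≤ (x:ℝ) := by positivity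
    nlinarith [mul_le_mul_of_nonneg_right hy hx0]

/-- Amossen–Pagh size bound for matrix queries: the full join size is at most
`N · √OUT`, where `N` is the input size and `OUT` the projected output size. -/
theorem stmt5 {A B C : Type*} [Fintype A] [Fintype B] [Fintype C]
    [DecidableEq A] [DecidableEq B] [DecidableEq C]
    (R₁ : Finset (A × B)) (R₂ : Finset (B × C))
    (N OUTJoin OUT : ℕ)
    (hN : N = R₁.card + R₂.card)
    (hJoin : OUTJoin = ((Finset.univ : Finset (A × B × C)).filter
      (fun t => (t.1, t.2.1) ∈ R₁ ∧ (t.2.1, t.2.2) ∈ R₂)).card)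
    (hOUT : OUT = ((Finset.univ : Finset (A × C)).filter
      (fun p => ∃ b, (p.1, b) ∈ R₁ ∧ (b, p.2) ∈ R₂)).card) :
    (OUTJoin : ℝ) ≤ (N : ℝ) * Real.sqrt (OUT : ℝ) := by
  classical
  set D₁ : B → ℕ := fun b => (Finset.univ.filter (fun a : A => (a, b) ∈ R₁)).card with hD₁
  set D₂ : B → ℕ := fun b => (Finset.univ.filter (fun c : C => (b, c) ∈ R₂)).card with hD₂
  have ite_mul : ∀ (p q : Prop) [Decidable p] [Decidable q],
      (if p ∧ q then (1:ℕ) else 0) = (if p then 1 else 0) * (if q then 1 else 0) := by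
    intro p q _ _; by_cases hp : p <;> by_cases hq : q <;> simp [hp, hq]
  -- Join count = ∑ b, D₁ b * D₂ b
  have hJoin' : OUTJoin = ∑ b : B, D₁ b * D₂ b := by
    rw [hJoin, Finset.card_filter, Fintype.sum_prod_type]
    simp only [Fintype.sum_prod_type]
    rw [Finset.sum_comm]
    refine Finset.sum_congr rfl (fun b _ => ?_)
    simp only [ite_mul]
    rw [hD₁, hD₂]
    simp only [Finset.card_filter]
    rw [Finset.sum_mul_sum]
  -- N = ∑ b, (D₁ b + D₂ b)
  have hN' : N = ∑ b : B, (D₁ b + D₂ b) := by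
    have h1 : R₁.card = ∑ b : B, D₁ b := by
      have : R₁ = Finset.univ.filter (fun p : A × B => p ∈ R₁) := by
        simp
      rw [this, Finset.card_filter, Fintype.sum_prod_type, Finset.sum_comm]
      refine Finset.sum_congr rfl (fun b _ => ?_)
      rw [hD₁]; exact (Finset.card_filter _ _).symm
    have h2 : R₂.card = ∑ b : B, D₂ b := by
      have : R₂ = Finset.univ.filter (fun p : B × C => p ∈ R₂) := by
        simp
      rw [this, Finset.card_filter, Fintype.sum_prod_type]
      refine Finset.sum_congr rfl (fun b _ => ?_)
      rw [hD₂]; exact (Finset.card_filter _ _).symm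
    rw [hN, h1, h2, ← Finset.sum_add_distrib]
  -- per-b bound
  have hprod : ∀ b : B, D₁ b * D₂ b ≤ OUT := by
    intro b
    rw [hOUT, hD₁, hD₂]
    rw [← Finset.card_product]
    apply Finset.card_le_card
    intro p hp
    rw [Finset.mem_product] at hp
    simp only [Finset.mem_filter, Finset.mem_univ, true_and] at hp ⊢
    exact ⟨b, hp.1, hp.2⟩
  -- real inequality
  calc (OUTJoin : ℝ) = ∑ b : B, (D₁ b : ℝ) * (D₂ b : ℝ) := by
        rw [hJoin']; push_cast; ring_nf
    _ ≤ ∑ b : B, ((D₁ b : ℝ) + (D₂ b : ℝ)) * Real.sqrt OUT := by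
        exact Finset.sum_le_sum (fun b _ => stmt5_aux _ _ _ (hprod b))
    _ = (N : ℝ) * Real.sqrt OUT := by
        rw [← Finset.sum_mul, hN']; push_cast; ring_nf
end

section
/- Let R₁ ⊆ A × B and R₂ ⊆ B × C be finite relations, b a fixed element of B with degree d₂(b) = |{c : (b,c) ∈ R₂}| ≥ 1, and Δ ≥ max_{b'} d₂(b') an upper bound on all degrees in R₂. Consider the random process: sample (a,b) uniformly from R₁, sample c uniformly from {c : (b,c) ∈ R₂}, then accept with probability d₂(b)/Δ. Then each full join triple (a,b,c) ∈ R₁ ⋈ R₂ is returned with probability exactly 1/(|R₁|·Δ), and the overall success probability is OUT_⋈/(|R₁|·Δ). -/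
open scoped ENNReal

/-- The degree of `b` in `R₂`, i.e. `|R₂ ⋉ b|`. -/
def deg2 {B C : Type*} [DecidableEq B] (R₂ : Finset (B × C)) (b : B) : ℕ :=
  (R₂.filter (fun q => q.1 = b)).card

/-- The rejection sampler `JoinSampleMatrix-L`: sample `(a,b)` uniformly from `R₁`, sample
`c` uniformly from the neighbors of `b` in `R₂`, then accept with probability `d₂(b)/Δ`. -/
noncomputable def lightProcess {A B C : Type*} [DecidableEq B]
    (R₁ : Finset (A × B)) (R₂ : Finset (B × C)) (Δ : ℕ)
    (h₁ : R₁.Nonempty) (hΔ : ∀ b, deg2 R₂ b ≤ Δ) : PMF (Option (A × B × C)) :=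
  (PMF.uniformOfFinset R₁ h₁).bind fun p =>
    if h : (R₂.filter (fun q => q.1 = p.2)).Nonempty then
      (PMF.uniformOfFinset _ h).bind fun q =>
        (PMF.bernoulli ((deg2 R₂ p.2 : ℝ≥0∞) / (Δ : ℝ≥0∞)).toNNReal
          (by
            have h : ((deg2 R₂ p.2 : ℝ≥0∞) / (Δ : ℝ≥0∞)) ≤ 1 :=
              ENNReal.div_le_of_le_mul (by rw [one_mul]; exact_mod_cast hΔ p.2)
            simpa using ENNReal.toNNReal_mono ENNReal.one_ne_top h)).bind fun acc =>
          PMF.pure (if acc then some (p.1, p.2, q.2) else none)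
    else PMF.pure none

/-! The triple `(a,b,c)` can only come from drawing `(a,b)` from `R₁` and then `(b,c)` among the
neighbours of `b`, so it is returned with probability `|R₁|⁻¹ · d₂(b)⁻¹ · d₂(b)/Δ = 1/(|R₁|·Δ)`:
the acceptance step exactly cancels the bias towards low-degree `b`. -/

namespace PMF

variable {α β : Type*}

theorem bernoulli_bind_pure_ite_apply_some_self (p : NNReal) (h : p ≤ 1) (x : α) :
    ((bernoulli p h).bind fun acc => pure (if acc then some x else none)) (some x) = p := by
  simp [bind_apply, bernoulli_apply]

theorem bernoulli_bind_pure_ite_apply_some_of_ne (p : NNReal) (h : p ≤ 1) {x y : α}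
    (hyx : y ≠ x) :
    ((bernoulli p h).bind fun acc => pure (if acc then some x else none)) (some y) = 0 := by
  simp [bind_apply, hyx]

theorem uniformOfFinset_bind_apply_eq_single {s : Finset α} (hs : s.Nonempty)
    (f : α → PMF β) (y : β) {a₀ : α} (ha₀ : a₀ ∈ s)
    (hf : ∀ a ∈ s, a ≠ a₀ → f a y = 0) :
    (uniformOfFinset s hs).bind f y = (s.card : ℝ≥0∞)⁻¹ * f a₀ y := by
  rw [bind_apply, tsum_eq_single a₀, uniformOfFinset_apply_of_mem hs ha₀]
  intro a ha
  by_cases has : a ∈ s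
  · rw [hf a has ha, mul_zero]
  · rw [uniformOfFinset_apply_of_notMem hs has, zero_mul]

end PMF

theorem lightProcess_apply_of_mem {A B C : Type*} [DecidableEq B]
    (R₁ : Finset (A × B)) (R₂ : Finset (B × C)) (Δ : ℕ)
    (h₁ : R₁.Nonempty) (hΔ : ∀ b, deg2 R₂ b ≤ Δ)
    {a : A} {b : B} {c : C} (hab : (a, b) ∈ R₁) (hbc : (b, c) ∈ R₂) :
    lightProcess R₁ R₂ Δ h₁ hΔ (some (a, b, c)) = 1 / ((R₁.card : ℝ≥0∞) * Δ) := by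
  have hnbr : (b, c) ∈ R₂.filter (fun q => q.1 = b) := Finset.mem_filter.mpr ⟨hbc, rfl⟩
  have hnbrs : (R₂.filter (fun q => q.1 = b)).Nonempty := ⟨_, hnbr⟩
  have hdeg : deg2 R₂ b ≠ 0 := Finset.card_ne_zero.mpr hnbrs
  have hΔ₀ : (Δ : ℝ≥0∞) ≠ 0 := by exact_mod_cast (Nat.pos_of_ne_zero hdeg).trans_le (hΔ b) |>.ne'
  rw [lightProcess, PMF.uniformOfFinset_bind_apply_eq_single _ _ _ hab]
  · dsimp only
    rw [dif_pos hnbrs, PMF.uniformOfFinset_bind_apply_eq_single _ _ _ hnbr,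
      PMF.bernoulli_bind_pure_ite_apply_some_self,
      ENNReal.coe_toNNReal (ENNReal.div_ne_top (ENNReal.natCast_ne_top _) hΔ₀)]
    · change _ * ((deg2 R₂ b : ℝ≥0∞)⁻¹ * _) = _
      rw [div_eq_mul_inv, ENNReal.inv_mul_cancel_left (by exact_mod_cast hdeg)
        (ENNReal.natCast_ne_top _), one_div,
        ENNReal.mul_inv (.inr (ENNReal.natCast_ne_top _)) (.inl (ENNReal.natCast_ne_top _))]
    · rintro q hq hqc
      refine PMF.bernoulli_bind_pure_ite_apply_some_of_ne _ _ fun h => hqc ?_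
      exact Prod.ext (Finset.mem_filter.mp hq).2 (by simpa using h.symm)
  · rintro p - hp
    split_ifs
    · exact ENNReal.tsum_eq_zero.mpr fun q => mul_eq_zero_of_right _ <|
        PMF.bernoulli_bind_pure_ite_apply_some_of_ne _ _ fun h => hp (by simp_all)
    · exact PMF.pure_apply_of_ne _ _ (Option.some_ne_none _)

/-- Each full join triple `(a,b,c) ∈ R₁ ⋈ R₂` is returned by `JoinSampleMatrix-L` with
probability exactly `1/(|R₁|·Δ)`, and the overall success probability is
`OUT_⋈/(|R₁|·Δ)`. -/
theorem stmt6 {A B C : Type*} [Fintype A] [Fintype B] [Fintype C]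
    [DecidableEq A] [DecidableEq B] [DecidableEq C]
    (R₁ : Finset (A × B)) (R₂ : Finset (B × C)) (Δ : ℕ)
    (h₁ : R₁.Nonempty) (hΔ : ∀ b', deg2 R₂ b' ≤ Δ)
    (OUTJoin : ℕ)
    (hJoin : OUTJoin = ((Finset.univ : Finset (A × B × C)).filter
      (fun t => (t.1, t.2.1) ∈ R₁ ∧ (t.2.1, t.2.2) ∈ R₂)).card) :
    (∀ (a : A) (b : B) (c : C), (a, b) ∈ R₁ → (b, c) ∈ R₂ → 1 ≤ deg2 R₂ b →
      lightProcess R₁ R₂ Δ h₁ hΔ (some (a, b, c))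
          = 1 / ((R₁.card : ℝ≥0∞) * (Δ : ℝ≥0∞))) ∧
    ∑ t ∈ (Finset.univ : Finset (A × B × C)).filter
        (fun t => (t.1, t.2.1) ∈ R₁ ∧ (t.2.1, t.2.2) ∈ R₂),
      lightProcess R₁ R₂ Δ h₁ hΔ (some t)
        = (OUTJoin : ℝ≥0∞) / ((R₁.card : ℝ≥0∞) * (Δ : ℝ≥0∞)) := by
  refine ⟨fun a b c hab hbc _ => lightProcess_apply_of_mem R₁ R₂ Δ h₁ hΔ hab hbc, ?_⟩
  rw [Finset.sum_congr rfl fun t ht => lightProcess_apply_of_mem R₁ R₂ Δ h₁ hΔ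
      (Finset.mem_filter.mp ht).2.1 (Finset.mem_filter.mp ht).2.2,
    Finset.sum_const, nsmul_eq_mul, hJoin, mul_one_div]
end

section
/- Let R₁ ⊆ A × B and R₂ ⊆ B × C be finite relations. For each b ∈ B let W_b = |{a : (a,b) ∈ R₁}| · |{c : (b,c) ∈ R₂}| and W = Σ_b W_b. Consider the process: sample b with probability W_b/W, then sample a uniformly from {a : (a,b) ∈ R₁} and c uniformly from {c : (b,c) ∈ R₂}. Then each triple (a,b,c) in the full join R₁ ⋈ R₂ is returned with probability exactly 1/W, and W equals the size of the full join. -/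
open scoped ENNReal

/-- Degree of `b` in `R₁`, i.e. `|{a : (a,b) ∈ R₁}|`. -/
def deg1 {A B : Type*} [DecidableEq B] (R₁ : Finset (A × B)) (b : B) : ℕ :=
  (R₁.filter (fun q => q.2 = b)).card

/-- The weight `W_b = |R₁ ⋉ b| · |R₂ ⋉ b|`. -/
def weightB {A B C : Type*} [DecidableEq B]
    (R₁ : Finset (A × B)) (R₂ : Finset (B × C)) (b : B) : ℕ :=
  deg1 R₁ b * deg2 R₂ b

/-- The total weight `W = Σ_b W_b`. -/
def totalW {A B C : Type*} [Fintype B] [DecidableEq B]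
    (R₁ : Finset (A × B)) (R₂ : Finset (B × C)) : ℕ :=
  ∑ b, weightB R₁ R₂ b

/-- The weighted sampler `JoinSampleMatrix-H`: sample `b` with probability `W_b/W`, then
sample `a` uniformly from `{a : (a,b) ∈ R₁}` and `c` uniformly from `{c : (b,c) ∈ R₂}`. -/
noncomputable def heavyProcess {A B C : Type*} [Fintype B] [DecidableEq B]
    (R₁ : Finset (A × B)) (R₂ : Finset (B × C))
    (hW : totalW R₁ R₂ ≠ 0) : PMF (Option (A × B × C)) :=
  (PMF.ofFintype (fun b : B => (weightB R₁ R₂ b : ℝ≥0∞) / (totalW R₁ R₂ : ℝ≥0∞))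
    (by
      have h0 : ((totalW R₁ R₂ : ℕ) : ℝ≥0∞) ≠ 0 := by exact_mod_cast hW
      have htop : ((totalW R₁ R₂ : ℕ) : ℝ≥0∞) ≠ ⊤ := ENNReal.natCast_ne_top _
      simp only [div_eq_mul_inv, ← Finset.sum_mul]
      rw [← Nat.cast_sum]
      exact ENNReal.mul_inv_cancel h0 htop)).bind fun b =>
    if h : (R₁.filter (fun q => q.2 = b)).Nonempty ∧
        (R₂.filter (fun q => q.1 = b)).Nonempty then
      (PMF.uniformOfFinset _ h.1).bind fun p =>
        (PMF.uniformOfFinset _ h.2).bind fun q =>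
          PMF.pure (some (p.1, b, q.2))
    else PMF.pure none

/-- Each full join triple `(a,b,c) ∈ R₁ ⋈ R₂` is returned by `JoinSampleMatrix-H` with
probability exactly `1/W`, and `W` equals the size of the full join. -/
theorem stmt7 {A B C : Type*} [Fintype A] [Fintype B] [Fintype C]
    [DecidableEq A] [DecidableEq B] [DecidableEq C]
    (R₁ : Finset (A × B)) (R₂ : Finset (B × C))
    (hW : 1 ≤ totalW R₁ R₂) :
    (∀ (a : A) (b : B) (c : C), (a, b) ∈ R₁ → (b, c) ∈ R₂ →
      heavyProcess R₁ R₂ (Nat.one_le_iff_ne_zero.mp hW) (some (a, b, c))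
          = 1 / (totalW R₁ R₂ : ℝ≥0∞)) ∧
    totalW R₁ R₂ = ((Finset.univ : Finset (A × B × C)).filter
      (fun t => (t.1, t.2.1) ∈ R₁ ∧ (t.2.1, t.2.2) ∈ R₂)).card := by
  classical
  constructor
  · intro a b c h1 h2
    have hS1 : ((a, b) : A × B) ∈ R₁.filter (fun q => q.2 = b) := by simp [h1]
    have hS2 : ((b, c) : B × C) ∈ R₂.filter (fun q => q.1 = b) := by simp [h2]
    have hd1 : (R₁.filter (fun q => q.2 = b)).Nonempty := ⟨_, hS1⟩
    have hd2 : (R₂.filter (fun q => q.1 = b)).Nonempty := ⟨_, hS2⟩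
    have hd1n : deg1 R₁ b ≠ 0 := Finset.card_ne_zero.mpr hd1
    have hd2n : deg2 R₂ b ≠ 0 := Finset.card_ne_zero.mpr hd2
    have hd1' : (deg1 R₁ b : ℝ≥0∞) ≠ 0 := Nat.cast_ne_zero.mpr hd1n
    have hd2' : (deg2 R₂ b : ℝ≥0∞) ≠ 0 := Nat.cast_ne_zero.mpr hd2n
    rw [heavyProcess, PMF.bind_apply, tsum_fintype]
    rw [Finset.sum_eq_single_of_mem b (Finset.mem_univ b)]
    · have hinner : ∀ (hh1 : (R₁.filter (fun q => q.2 = b)).Nonempty)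
          (hh2 : (R₂.filter (fun q => q.1 = b)).Nonempty),
          ((PMF.uniformOfFinset _ hh1).bind fun p =>
            (PMF.uniformOfFinset _ hh2).bind fun q =>
              PMF.pure (some (p.1, b, q.2))) (some (a, b, c))
            = (deg1 R₁ b : ℝ≥0∞)⁻¹ * (deg2 R₂ b : ℝ≥0∞)⁻¹ := by
        intro hh1 hh2
        rw [PMF.bind_apply, tsum_fintype]
        rw [Finset.sum_eq_single_of_mem (a, b) (Finset.mem_univ _)]
        · rw [PMF.uniformOfFinset_apply, if_pos hS1, PMF.bind_apply, tsum_fintype]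
          rw [Finset.sum_eq_single_of_mem (b, c) (Finset.mem_univ _)]
          · rw [PMF.uniformOfFinset_apply, if_pos hS2, PMF.pure_apply, if_pos rfl]
            simp [deg1, deg2]
          · intro q _ hq
            by_cases hmem : q ∈ R₂.filter (fun q => q.1 = b)
            · have hq1 : q.1 = b := (Finset.mem_filter.mp hmem).2
              have hne : (some ((a, b, c)) : Option (A × B × C))
                  ≠ some ((Prod.mk a b).1, b, q.2) := by
                intro h
                have h' := Option.some.inj h
                have hc : c = q.2 := congrArg (fun t : A × B × C => t.2.2) h'
                exact hq (Prod.ext hq1 hc.symm)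
              apply mul_eq_zero_of_right
              rw [PMF.pure_apply, if_neg hne]
            · simp [PMF.uniformOfFinset_apply, hmem]
        · intro p _ hp
          by_cases hmem : p ∈ R₁.filter (fun q => q.2 = b)
          · have hp2 : p.2 = b := (Finset.mem_filter.mp hmem).2
            have hpa : p.1 ≠ a := fun h => hp (Prod.ext h hp2)
            apply mul_eq_zero_of_right
            rw [PMF.bind_apply, tsum_fintype]
            apply Finset.sum_eq_zero
            intro q _
            have hne : (some ((a, b, c)) : Option (A × B × C)) ≠ some (p.1, b, q.2) := by
              intro h
              have h' := Option.some.inj h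
              exact hpa (congrArg (fun t : A × B × C => t.1) h').symm
            simp [PMF.pure_apply, hne]
          · simp [PMF.uniformOfFinset_apply, hmem]
      rw [dif_pos ⟨hd1, hd2⟩, hinner, PMF.ofFintype_apply]
      have hcancel : ((deg1 R₁ b : ℝ≥0∞) * (deg2 R₂ b : ℝ≥0∞))
          * ((deg1 R₁ b : ℝ≥0∞)⁻¹ * (deg2 R₂ b : ℝ≥0∞)⁻¹) = 1 := by
        rw [mul_mul_mul_comm,
          ENNReal.mul_inv_cancel hd1' (ENNReal.natCast_ne_top _),
          ENNReal.mul_inv_cancel hd2' (ENNReal.natCast_ne_top _), one_mul]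
      rw [weightB, div_eq_mul_inv, one_div, Nat.cast_mul]
      rw [mul_right_comm, hcancel, one_mul]
    · intro b' _ hb'
      apply mul_eq_zero_of_right
      by_cases h : (R₁.filter (fun q => q.2 = b')).Nonempty ∧
          (R₂.filter (fun q => q.1 = b')).Nonempty
      · rw [dif_pos h, PMF.bind_apply, tsum_fintype]
        apply Finset.sum_eq_zero
        intro p _
        apply mul_eq_zero_of_right
        rw [PMF.bind_apply, tsum_fintype]
        apply Finset.sum_eq_zero
        intro q _
        have hne : (some ((a, b, c)) : Option (A × B × C)) ≠ some (p.1, b', q.2) := by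
          intro hEq
          have h' := Option.some.inj hEq
          exact hb' (congrArg (fun t : A × B × C => t.2.1) h').symm
        simp [PMF.pure_apply, hne]
      · rw [dif_neg h, PMF.pure_apply, if_neg (by simp)]
  · rw [totalW,
      Finset.card_eq_sum_card_fiberwise
        (f := fun t : A × B × C => t.2.1) (t := Finset.univ)
        (fun x _ => Finset.mem_univ x.2.1)]
    apply Finset.sum_congr rfl
    intro b _
    rw [weightB, deg1, deg2, ← Finset.card_product]
    refine Finset.card_bij' (fun pq _ => (pq.1.1, b, pq.2.2))
      (fun t _ => ((t.1, b), (b, t.2.2))) ?hi ?hj ?li ?ri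
    case hi =>
      rintro ⟨⟨a', b1⟩, b2, c'⟩ hpq
      simp only [Finset.mem_product, Finset.mem_filter] at hpq
      obtain ⟨⟨hm1, hb1⟩, hm2, hb2⟩ := hpq
      subst hb1; subst hb2
      simp [Finset.mem_filter, hm1, hm2]
    case hj =>
      rintro ⟨a', b', c'⟩ ht
      simp only [Finset.mem_filter, Finset.mem_univ, true_and] at ht
      obtain ⟨⟨hm1, hm2⟩, hb⟩ := ht
      subst hb
      simp [Finset.mem_product, Finset.mem_filter, hm1, hm2]
    case li =>
      rintro ⟨⟨a', b1⟩, b2, c'⟩ hpq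
      simp only [Finset.mem_product, Finset.mem_filter] at hpq
      obtain ⟨⟨_, hb1⟩, _, hb2⟩ := hpq
      subst hb1; subst hb2; rfl
    case ri =>
      rintro ⟨a', b', c'⟩ ht
      simp only [Finset.mem_filter] at ht
      have hb : b' = b := ht.2
      subst hb; rfl
end

section
/- Under the same setup, if instead s^heavy < β·s^light, with additionally (1−ε')·OUT^heavy ≤ s^heavy and s^light·β ≤ I + 3ε'·OUT^light, then OUT^heavy − I < ε'·OUT^heavy + 3ε'·OUT^light ≤ 4ε'·OUT, and consequently the estimator s = s^light satisfies (1 − 5ε')·OUT ≤ s ≤ (1 + ε')·OUT. -/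
/-- Error analysis for Case 1.2 (`s^heavy < β·s^light`): the heavy part is almost entirely
contained in the overlap, and `s = s^light` is a `5ε'`-approximation of `OUT`. -/
theorem stmt15 (OUTh OUTl OUT sh sl I β ε' : ℝ)
    (hh : 0 ≤ OUTh) (hl : 0 ≤ OUTl) (hOUT : 0 < OUT)
    (hOUTdef : OUT = OUTl + (OUTh - I))
    (hIle : I ≤ OUTh)
    (hhle : OUTh ≤ OUT) (hlle : OUTl ≤ OUT)
    (hε'0 : 0 < ε') (hε'1 : ε' ≤ 1/5)
    (e1 : |sh - OUTh| ≤ ε' * OUTh)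
    (e2 : |sl - OUTl| ≤ ε' * OUTl)
    (hlb : (1 - ε') * OUTh ≤ sh)
    (hub : sl * β ≤ I + 3 * ε' * OUTl)
    (hcase : sh < β * sl) :
    OUTh - I < ε' * OUTh + 3 * ε' * OUTl ∧
    ε' * OUTh + 3 * ε' * OUTl ≤ 4 * ε' * OUT ∧
    (1 - 5 * ε') * OUT ≤ sl ∧ sl ≤ (1 + ε') * OUT := by
  rw [abs_le] at e1 e2
  have h1 : OUTh - I < ε' * OUTh + 3 * ε' * OUTl := by nlinarith [mul_pos hε'0 hOUT]
  refine ⟨h1, by nlinarith [mul_pos hε'0 hOUT], ?_, by nlinarith⟩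
  nlinarith [mul_pos hε'0 hOUT, sq_nonneg ε', mul_nonneg hε'0.le hl, mul_nonneg (mul_nonneg hε'0.le hε'0.le) hOUT.le]
end
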